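/- arXiv:2009.01639 — 6 statements merged into one kernel-verified Lean document; each statement's English description precedes it below -/
import Mathlib

section
/- For every j ∈ ℕ₀ and every j-times differentiable matrix-valued function X : I → ℝ^{n×n} on a nonempty open real interval I, the noncommutative complete Bell polynomials satisfy the identity B_{j+1}(X, X', ..., X^{(j)}) = X · B_j(X, X', ..., X^{(j-1)}) + (B_j(X, X', ..., X^{(j-1)}))' on I. -/
open Matrix

/-- Noncommutative complete Bell polynomials: `B_0 = I_n`,
`B_{m+1}(X_1,…,X_{m+1}) = ∑_{j=0}^m C(m,j) B_j(X_1,…,X_j) X_{m+1-j}`.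
Here `X : Fin m → _` with `X i` playing the role of `X_{i+1}`. -/
noncomputable def Bell {n : ℕ} :
    (m : ℕ) → (Fin m → Matrix (Fin n) (Fin n) ℝ) → Matrix (Fin n) (Fin n) ℝ
  | 0, _ => 1
  | m + 1, X => ∑ j : Fin (m + 1),
      (Nat.choose m (j : ℕ) : ℝ) •
        (Bell (j : ℕ) (fun i : Fin (j : ℕ) => X (Fin.castLE (by omega) i)) *
          X ⟨m - (j : ℕ), by omega⟩)

/-- Entrywise `k`-th derivative (within `I`) of a matrix-valued function. -/
noncomputable def matD {n : ℕ} (I : Set ℝ) (X : ℝ → Matrix (Fin n) (Fin n) ℝ) (k : ℕ)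
    (x : ℝ) : Matrix (Fin n) (Fin n) ℝ :=
  Matrix.of fun p q => iteratedDerivWithin k (fun t => X t p q) I x

/-- `B_j(X, X', …, X^{(j-1)})` evaluated at `x` (derivatives within `I`). -/
noncomputable def BellD {n : ℕ} (I : Set ℝ) (X : ℝ → Matrix (Fin n) (Fin n) ℝ) (j : ℕ)
    (x : ℝ) : Matrix (Fin n) (Fin n) ℝ :=
  Bell j (fun i : Fin j => matD I X (i : ℕ) x)

/-- Generalized Wronskian `W_f^k = det(f^{(k_1)} | … | f^{(k_n)})` (derivatives within `I`). -/
noncomputable def genW {n : ℕ} (I : Set ℝ) (f : ℝ → Fin n → ℝ) (k : Fin n → ℕ) (x : ℝ) : ℝ :=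
  Matrix.det (Matrix.of fun p q => iteratedDerivWithin (k q) (fun t => f t p) I x)

/-- The multi-index `(n-1, n-2, …, 1, 0)` of the ordinary Wronskian. -/
def wIdx (n : ℕ) : Fin n → ℕ := fun q => n - 1 - (q : ℕ)

/-- The multi-index `(n+d, n-1, …, j+1, j-1, …, 1, 0)`. -/
def dIdx (n d j : ℕ) : Fin n → ℕ :=
  fun q => if (q : ℕ) = 0 then n + d
    else if j < n - (q : ℕ) then n - (q : ℕ) else n - (q : ℕ) - 1

/-- `Φ_f^{[j]} = (-1)^{n-j-1} W_f^{(n,n-1,…,j+1,j-1,…,0)} / W_f`. -/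
noncomputable def Phi {n : ℕ} (I : Set ℝ) (f : ℝ → Fin n → ℝ) (j : ℕ) (x : ℝ) : ℝ :=
  (-1 : ℝ) ^ (n - j - 1) * genW I f (dIdx n 0 j) x / genW I f (wIdx n) x

/-- The `1`-indexed standard basis vector `e_i` of `ℝ^n`. -/
def stdB (n i : ℕ) : Fin n → ℝ := fun p => if (p : ℕ) + 1 = i then 1 else 0

/-- The matrix `X_a = (a | e_1 | … | e_{n-1})`. -/
def colMat {n : ℕ} (a : ℝ → Fin n → ℝ) (x : ℝ) : Matrix (Fin n) (Fin n) ℝ :=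
  Matrix.of fun p q =>
    if (q : ℕ) = 0 then a x p else if (p : ℕ) + 1 = (q : ℕ) then 1 else 0

/-- The matrix `Y_f = (f^{(n-1)} | … | f' | f)` (derivatives within `I`). -/
noncomputable def Yfun {n : ℕ} (I : Set ℝ) (f : ℝ → Fin n → ℝ) (x : ℝ) :
    Matrix (Fin n) (Fin n) ℝ :=
  Matrix.of fun p q => iteratedDerivWithin (n - 1 - (q : ℕ)) (fun t => f t p) I x

/-- The `1`-indexed component `a_i` of `a : I → ℝ^n`, with `a_i := 0` for `i > n`. -/
noncomputable def aExt {n : ℕ} (a : ℝ → Fin n → ℝ) (i : ℕ) : ℝ → ℝ :=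
  fun t => if h : i - 1 < n then a t ⟨i - 1, h⟩ else 0

/-- `y` is an `n`-times differentiable (on `I`) solution of
`y^{(n)} = a_1 y^{(n-1)} + ⋯ + a_n y`, where `a i` is `a_{i+1}`. -/
def SolvesDE {n : ℕ} (I : Set ℝ) (a : ℝ → Fin n → ℝ) (y : ℝ → ℝ) : Prop :=
  (∀ k < n, DifferentiableOn ℝ (iteratedDerivWithin k y I) I) ∧
    ∀ x ∈ I, iteratedDerivWithin n y I x =
      ∑ i : Fin n, a x i * iteratedDerivWithin (n - 1 - (i : ℕ)) y I x

/-- `f : I → ℝ^n` is a fundamental system of solutions of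
`y^{(n)} = a_1 y^{(n-1)} + ⋯ + a_n y`: each component solves the equation and the
components are linearly independent functions on `I`. -/
def FundSystem {n : ℕ} (I : Set ℝ) (a : ℝ → Fin n → ℝ) (f : ℝ → Fin n → ℝ) : Prop :=
  (∀ p : Fin n, SolvesDE I a fun t => f t p) ∧
    LinearIndependent ℝ fun p : Fin n => I.restrict fun t => f t p

lemma bellD_zero {n : ℕ} (I : Set ℝ) (X : ℝ → Matrix (Fin n) (Fin n) ℝ) (x : ℝ) :
    BellD I X 0 x = 1 := by rw [BellD, Bell]

lemma matD_zero {n : ℕ} (I : Set ℝ) (X : ℝ → Matrix (Fin n) (Fin n) ℝ) (x : ℝ) :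
    matD I X 0 x = X x := by
  ext p q; simp [matD, iteratedDerivWithin_zero]

lemma bellD_succ {n : ℕ} (I : Set ℝ) (X : ℝ → Matrix (Fin n) (Fin n) ℝ) (m : ℕ) (x : ℝ) :
    BellD I X (m+1) x = ∑ k ∈ Finset.range (m+1),
      (Nat.choose m k : ℝ) • (BellD I X k x * matD I X (m-k) x) := by
  rw [BellD, Bell,
    ← Fin.sum_univ_eq_sum_range
      (fun k => (Nat.choose m k : ℝ) • (BellD I X k x * matD I X (m-k) x)) (m+1)]
  refine Finset.sum_congr rfl fun j _ => ?_
  simp [BellD]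
lemma key_alg {n : ℕ} (b M : ℕ → Matrix (Fin n) (Fin n) ℝ) (A : Matrix (Fin n) (Fin n) ℝ)
    (hb : ∀ k, b (k+1) = ∑ i ∈ Finset.range (k+1), (Nat.choose k i : ℝ) • (b i * M (k-i)))
    (j : ℕ) :
    ∑ k ∈ Finset.range (j+1), (Nat.choose j k : ℝ) •
        ((b (k+1) - A * b k) * M (j-k) + b k * M (j-k+1))
      = b (j+2) - A * b (j+1) := by
  have h1 : ∀ k, (Nat.choose j k : ℝ) • ((b (k+1) - A * b k) * M (j-k) + b k * M (j-k+1))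
      = (Nat.choose j k : ℝ) • (b (k+1) * M (j-k)) + (Nat.choose j k : ℝ) • (b k * M (j-k+1))
        - A * ((Nat.choose j k : ℝ) • (b k * M (j-k))) := by
    intro k
    rw [mul_smul_comm, sub_mul, Matrix.mul_assoc, smul_add, smul_sub]
    abel
  rw [Finset.sum_congr rfl (fun k _ => h1 k), Finset.sum_sub_distrib, Finset.sum_add_distrib,
    ← Finset.mul_sum, ← hb j]
  congr 1
  rw [hb (j+1), Finset.sum_range_succ'
    (fun i => (Nat.choose (j+1) i : ℝ) • (b i * M (j+1-i))) (j+1)]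
  have h2 : ∀ k, (Nat.choose (j+1) (k+1) : ℝ) • (b (k+1) * M (j+1-(k+1)))
      = (Nat.choose j k : ℝ) • (b (k+1) * M (j-k))
        + (Nat.choose j (k+1) : ℝ) • (b (k+1) * M (j-k)) := by
    intro k
    have h : j + 1 - (k+1) = j - k := by omega
    rw [h, Nat.choose_succ_succ]
    push_cast
    rw [add_smul]
  rw [Finset.sum_congr rfl (fun k _ => h2 k), Finset.sum_add_distrib]
  have h3 : ∑ k ∈ Finset.range (j+1), (Nat.choose j k : ℝ) • (b k * M (j-k+1))
      = ∑ k ∈ Finset.range (j+1), (Nat.choose j (k+1) : ℝ) • (b (k+1) * M (j-k))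
        + (Nat.choose (j+1) 0 : ℝ) • (b 0 * M (j+1-0)) := by
    rw [Finset.sum_range_succ' (fun k => (Nat.choose j k : ℝ) • (b k * M (j-k+1))) j,
      Finset.sum_range_succ (fun k => (Nat.choose j (k+1) : ℝ) • (b (k+1) * M (j-k))) j]
    simp only [Nat.choose_succ_self, Nat.cast_zero, zero_smul, add_zero, Nat.choose_zero_right,
      Nat.cast_one, one_smul, Nat.sub_zero, Nat.add_sub_cancel]
    refine congrArg₂ (· + ·) (Finset.sum_congr rfl fun k hk => ?_) rfl
    have h : j - (k+1) + 1 = j - k := by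
      have := Finset.mem_range.mp hk; omega
    rw [h]
  rw [h3]
  abel

lemma matD_hasDerivAt {n : ℕ} {I : Set ℝ} (hIo : IsOpen I) {x : ℝ} (hx : x ∈ I)
    {X : ℝ → Matrix (Fin n) (Fin n) ℝ} {m : ℕ} {p q : Fin n}
    (hd : DifferentiableOn ℝ (iteratedDerivWithin m (fun t => X t p q) I) I) :
    HasDerivAt (fun t => matD I X m t p q) (matD I X (m+1) x p q) x := by
  have h1 : DifferentiableAt ℝ (iteratedDerivWithin m (fun t => X t p q) I) x :=
    (hd x hx).differentiableAt (hIo.mem_nhds hx)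
  have h2 : matD I X (m+1) x p q = deriv (iteratedDerivWithin m (fun t => X t p q) I) x := by
    simp only [matD, Matrix.of_apply]
    rw [iteratedDerivWithin_succ, derivWithin_of_isOpen hIo hx]
  have h3 : (fun t => matD I X m t p q) = iteratedDerivWithin m (fun t => X t p q) I := rfl
  rw [h3, h2]
  exact h1.hasDerivAt

lemma bellD_hasDerivAt {n : ℕ} {I : Set ℝ} (hIo : IsOpen I)
    (X : ℝ → Matrix (Fin n) (Fin n) ℝ) :
    ∀ j : ℕ, (∀ p q : Fin n, ∀ k < j,
        DifferentiableOn ℝ (iteratedDerivWithin k (fun t => X t p q) I) I) →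
      ∀ x ∈ I, ∀ p q : Fin n,
        HasDerivAt (fun t => BellD I X j t p q)
          ((BellD I X (j+1) x - X x * BellD I X j x) p q) x := by
  intro j
  induction j using Nat.strong_induction_on with
  | _ j IH =>
    match j, IH with
    | 0, _ =>
      intro _ x hx p q
      have hval : (BellD I X (0+1) x - X x * BellD I X 0 x) p q = 0 := by
        rw [bellD_succ]
        simp [bellD_zero, matD_zero]
      have hfun : (fun t : ℝ => BellD I X 0 t p q)
          = fun _ : ℝ => (1 : Matrix (Fin n) (Fin n) ℝ) p q := by
        funext t; rw [bellD_zero]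
      rw [hfun, hval]
      exact hasDerivAt_const x _
    | m+1, IH =>
      intro hX x hx p q
      have hfun : (fun t => BellD I X (m+1) t p q)
          = fun t => ∑ k ∈ Finset.range (m+1), (Nat.choose m k : ℝ)
              * ∑ r : Fin n, BellD I X k t p r * matD I X (m-k) t r q := by
        funext t
        rw [bellD_succ I X m t]
        simp [Matrix.sum_apply, Matrix.smul_apply, Matrix.mul_apply, smul_eq_mul,
          Finset.mul_sum]
      have hder : HasDerivAt
          (fun t => ∑ k ∈ Finset.range (m+1), (Nat.choose m k : ℝ)
              * ∑ r : Fin n, BellD I X k t p r * matD I X (m-k) t r q)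
          (∑ k ∈ Finset.range (m+1), (Nat.choose m k : ℝ)
              * ∑ r : Fin n,
                ((BellD I X (k+1) x - X x * BellD I X k x) p r * matD I X (m-k) x r q
                  + BellD I X k x p r * matD I X (m-k+1) x r q)) x := by
        apply HasDerivAt.fun_sum
        intro k hk
        have hkm := Finset.mem_range.mp hk
        apply HasDerivAt.const_mul
        apply HasDerivAt.fun_sum
        intro r _
        have hc := IH k hkm (fun p q k' hk' => hX p q k' (by omega)) x hx p r
        have hd := matD_hasDerivAt hIo hx (hX r q (m-k) (by omega))
        exact hc.mul hd
      have hval : (∑ k ∈ Finset.range (m+1), (Nat.choose m k : ℝ)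
              * ∑ r : Fin n,
                ((BellD I X (k+1) x - X x * BellD I X k x) p r * matD I X (m-k) x r q
                  + BellD I X k x p r * matD I X (m-k+1) x r q))
          = (BellD I X (m+1+1) x - X x * BellD I X (m+1) x) p q := by
        rw [← key_alg (fun k => BellD I X k x) (fun k => matD I X k x) (X x)
          (fun k => bellD_succ I X k x) m]
        simp [Matrix.sum_apply, Matrix.smul_apply, Matrix.add_apply, Matrix.mul_apply,
          Matrix.sub_apply, smul_eq_mul, Finset.sum_add_distrib, mul_add, Finset.mul_sum]
      rw [hfun, ← hval]
      exact hder

/-- the differential recursion for noncommutative complete Bell polynomials: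
`B_{j+1}(X,…,X^{(j)}) = X ⬝ B_j(X,…,X^{(j-1)}) + (B_j(X,…,X^{(j-1)}))'` on `I`. -/
theorem stmt_0 (n j : ℕ) (hn : 0 < n) (I : Set ℝ) (hIo : IsOpen I) (hIne : I.Nonempty)
    (hIc : I.OrdConnected) (X : ℝ → Matrix (Fin n) (Fin n) ℝ)
    (hX : ∀ p q : Fin n, ∀ k < j,
      DifferentiableOn ℝ (iteratedDerivWithin k (fun t => X t p q) I) I) :
    ∀ x ∈ I, BellD I X (j + 1) x =
      X x * BellD I X j x +
        Matrix.of fun p q => derivWithin (fun t => BellD I X j t p q) I x := by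
  intro x hx
  ext p q
  have h := bellD_hasDerivAt hIo X j hX x hx p q
  have hd : derivWithin (fun t => BellD I X j t p q) I x
      = (BellD I X (j+1) x - X x * BellD I X j x) p q := by
    rw [derivWithin_of_isOpen hIo hx]
    exact h.deriv
  simp only [Matrix.add_apply, Matrix.of_apply, hd, Matrix.sub_apply]
  ring
end

section
/- Let n, m ∈ ℕ, let a = (a_1, ..., a_n) : I → ℝ^n be an (m−1)-times continuously differentiable function, and let f : I → ℝ^n be a fundamental system of solutions of the differential equation y^{(n)} = a_1 y^{(n-1)} + ... + a_n y. Define X_a := (a | e_1 | ... | e_{n-1}) and Y_f := (f^{(n-1)} | ... | f' | f). Then Y_f is m-times continuously differentiable and, for every j ∈ {0, ..., m}, Y_f^{(j)} = Y_f · B_j(X_a, X_a', ..., X_a^{(j-1)}) on I. -/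
open Matrix

open Finset

section myHelpers
variable {s : Set ℝ}

lemma iterCD (hs : UniqueDiffOn ℝ s) (k : ℕ) :
    ∀ {f : ℝ → ℝ} (j : ℕ), ContDiffOn ℝ (k + j : ℕ) f s →
      ContDiffOn ℝ (j : ℕ) (iteratedDerivWithin k f s) s := by
  induction k with
  | zero =>
    intro f j h
    exact (h.of_le (by norm_num)).congr fun x hx => by rw [iteratedDerivWithin_zero]
  | succ k IH =>
    intro f j h
    have hd : ContDiffOn ℝ (k + j : ℕ) (derivWithin f s) s := by
      apply h.derivWithin hs
      exact_mod_cast le_of_eq (by ring)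
    exact (IH j hd).congr fun x hx => congrFun iteratedDerivWithin_succ' x

lemma splitCD (hs : UniqueDiffOn ℝ s) (k : ℕ) :
    ∀ {f : ℝ → ℝ} (j : ℕ), ContDiffOn ℝ (k : ℕ) f s →
      ContDiffOn ℝ (j : ℕ) (iteratedDerivWithin k f s) s →
      ContDiffOn ℝ (k + j : ℕ) f s := by
  induction k with
  | zero =>
    intro f j _ h2
    simpa using h2.congr fun x hx => by rw [iteratedDerivWithin_zero]
  | succ k IH =>
    intro f j h1 h2
    have hdiff : DifferentiableOn ℝ f s :=
      h1.differentiableOn (by simp)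
    have hd1 : ContDiffOn ℝ (k : ℕ) (derivWithin f s) s :=
      h1.derivWithin hs (by exact_mod_cast le_refl (k + 1))
    have hd2 : ContDiffOn ℝ (j : ℕ) (iteratedDerivWithin k (derivWithin f s) s) s :=
      h2.congr fun x hx => (congrFun iteratedDerivWithin_succ' x).symm
    have h3 : ContDiffOn ℝ ((k + j : ℕ) + 1) f s := by
      rw [contDiffOn_succ_iff_derivWithin hs]
      exact ⟨hdiff, by simp, IH j hd1 hd2⟩
    exact h3.of_le (by exact_mod_cast le_of_eq (by ring))

end myHelpers

noncomputable def belN {n : ℕ} (M : ℕ → Matrix (Fin n) (Fin n) ℝ) (j : ℕ) :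
    Matrix (Fin n) (Fin n) ℝ := Bell j (fun i : Fin j => M i)

lemma belN_zero {n : ℕ} (M : ℕ → Matrix (Fin n) (Fin n) ℝ) : belN M 0 = 1 := by
  unfold belN Bell
  rfl

lemma belN_succ {n : ℕ} (M : ℕ → Matrix (Fin n) (Fin n) ℝ) (m : ℕ) :
    belN M (m + 1) = ∑ j ∈ Finset.range (m + 1),
      (Nat.choose m j : ℝ) • (belN M j * M (m - j)) := by
  rw [← Fin.sum_univ_eq_sum_range (fun j => (Nat.choose m j : ℝ) • (belN M j * M (m - j))) (m + 1)]
  show Bell (m + 1) (fun i : Fin (m + 1) => M i) = _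
  rw [Bell]
  rfl

lemma belN_one {n : ℕ} (M : ℕ → Matrix (Fin n) (Fin n) ℝ) : belN M 1 = M 0 := by
  rw [belN_succ]; simp [belN_zero]

lemma keyBell {n : ℕ} (M : ℕ → Matrix (Fin n) (Fin n) ℝ) (jj : ℕ) :
    (∑ i ∈ Finset.range (jj + 1), (Nat.choose jj i : ℝ) •
      ((belN M (i + 1) - M 0 * belN M i) * M (jj - i) + belN M i * M (jj + 1 - i)))
    = belN M (jj + 2) - M 0 * belN M (jj + 1) := by
  set T : ℕ → Matrix (Fin n) (Fin n) ℝ := fun i => belN M i * M (jj + 1 - i) with hT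
  have e2 : (∑ i ∈ Finset.range (jj + 1), (Nat.choose jj (i + 1) : ℝ) • T (i + 1))
      + (Nat.choose jj 0 : ℝ) • T 0
      = ∑ i ∈ Finset.range (jj + 1), (Nat.choose jj i : ℝ) • T i := by
    rw [← Finset.sum_range_succ' (fun i => (Nat.choose jj i : ℝ) • T i) (jj + 1),
      Finset.sum_range_succ]
    simp
  have e1 : belN M (jj + 2)
      = (∑ i ∈ Finset.range (jj + 1), (Nat.choose jj i : ℝ) • (belN M (i + 1) * M (jj - i)))
        + ∑ i ∈ Finset.range (jj + 1), (Nat.choose jj i : ℝ) • T i := by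
    rw [belN_succ M (jj + 1), Finset.sum_range_succ' _ (jj + 1)]
    have hsplit : ∀ i ∈ Finset.range (jj + 1),
        ((jj + 1).choose (i + 1) : ℝ) • (belN M (i + 1) * M (jj + 1 - (i + 1)))
        = (Nat.choose jj i : ℝ) • (belN M (i + 1) * M (jj - i))
          + (Nat.choose jj (i + 1) : ℝ) • T (i + 1) := by
      intro i _
      rw [Nat.choose_succ_succ]
      push_cast
      rw [add_smul]
      simp [hT, Nat.succ_sub_succ]
    rw [Finset.sum_congr rfl hsplit, Finset.sum_add_distrib]
    have : ((jj + 1).choose 0 : ℝ) • (belN M 0 * M (jj + 1 - 0)) = (Nat.choose jj 0 : ℝ) • T 0 := by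
      simp [hT]
    rw [this, add_assoc, e2]
  have e3 : M 0 * belN M (jj + 1)
      = ∑ i ∈ Finset.range (jj + 1), (Nat.choose jj i : ℝ) • (M 0 * (belN M i * M (jj - i))) := by
    rw [belN_succ M jj, Finset.mul_sum]
    exact Finset.sum_congr rfl fun i _ => mul_smul_comm _ _ _
  calc (∑ i ∈ Finset.range (jj + 1), (Nat.choose jj i : ℝ) •
      ((belN M (i + 1) - M 0 * belN M i) * M (jj - i) + belN M i * M (jj + 1 - i)))
      = (∑ i ∈ Finset.range (jj + 1), (Nat.choose jj i : ℝ) • (belN M (i + 1) * M (jj - i)))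
        + ((∑ i ∈ Finset.range (jj + 1), (Nat.choose jj i : ℝ) • T i)
          - ∑ i ∈ Finset.range (jj + 1), (Nat.choose jj i : ℝ) • (M 0 * (belN M i * M (jj - i)))) := by
        rw [← Finset.sum_sub_distrib, ← Finset.sum_add_distrib]
        refine Finset.sum_congr rfl fun i _ => ?_
        simp only [hT]
        rw [sub_mul, mul_assoc]
        module
    _ = belN M (jj + 2) - M 0 * belN M (jj + 1) := by
        rw [← e3, e1]; abel

lemma belN_hasDeriv {n : ℕ} (I : Set ℝ) (M : ℝ → ℕ → Matrix (Fin n) (Fin n) ℝ) (x : ℝ)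
    (j : ℕ) :
    (∀ i < j, ∀ p q, HasDerivWithinAt (fun t => M t i p q) (M x (i + 1) p q) I x) →
    ∀ p q, HasDerivWithinAt (fun t => belN (M t) j p q)
      ((belN (M x) (j + 1) - M x 0 * belN (M x) j) p q) I x := by
  induction j using Nat.strong_induction_on with
  | _ j IH =>
    intro hM p q
    rcases j with _ | jj
    · have h0 : ∀ t : ℝ, belN (M t) 0 p q = (1 : Matrix (Fin n) (Fin n) ℝ) p q := fun t => by
        rw [belN_zero]
      have : (belN (M x) 1 - M x 0 * belN (M x) 0) p q = 0 := by
        rw [belN_one, belN_zero, mul_one, sub_self, Matrix.zero_apply]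
      rw [this]
      exact (hasDerivWithinAt_const x I ((1 : Matrix (Fin n) (Fin n) ℝ) p q)).congr
        (fun t _ => h0 t) (h0 x)
    · -- rewrite the function as a double sum
      have hfun : ∀ t : ℝ, belN (M t) (jj + 1) p q
          = ∑ i ∈ Finset.range (jj + 1), (Nat.choose jj i : ℝ) *
              ∑ k : Fin n, belN (M t) i p k * M t (jj - i) k q := by
        intro t
        rw [belN_succ, Matrix.sum_apply]
        exact Finset.sum_congr rfl fun i _ => by
          rw [Matrix.smul_apply, Matrix.mul_apply, smul_eq_mul]
      have hder : HasDerivWithinAt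
          (fun t => ∑ i ∈ Finset.range (jj + 1), (Nat.choose jj i : ℝ) *
              ∑ k : Fin n, belN (M t) i p k * M t (jj - i) k q)
          (∑ i ∈ Finset.range (jj + 1), (Nat.choose jj i : ℝ) *
              ∑ k : Fin n, (((belN (M x) (i + 1) - M x 0 * belN (M x) i) p k) * M x (jj - i) k q
                + belN (M x) i p k * M x (jj - i + 1) k q)) I x := by
        apply HasDerivWithinAt.fun_sum
        intro i hi
        have hi' : i < jj + 1 := Finset.mem_range.1 hi
        apply HasDerivWithinAt.const_mul
        apply HasDerivWithinAt.fun_sum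
        intro k _
        exact (IH i hi' (fun i' hil p' q' => hM i' (lt_trans hil hi') p' q') p k).mul
          (hM (jj - i) (by omega) k q)
      have hval : (∑ i ∈ Finset.range (jj + 1), (Nat.choose jj i : ℝ) *
              ∑ k : Fin n, (((belN (M x) (i + 1) - M x 0 * belN (M x) i) p k) * M x (jj - i) k q
                + belN (M x) i p k * M x (jj - i + 1) k q))
          = (belN (M x) (jj + 2) - M x 0 * belN (M x) (jj + 1)) p q := by
        have hk := congrArg (fun A : Matrix (Fin n) (Fin n) ℝ => A p q) (keyBell (M x) jj)
        simp only [Matrix.sum_apply, Matrix.smul_apply, Matrix.add_apply, Matrix.mul_apply,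
          smul_eq_mul] at hk
        rw [← hk]
        refine Finset.sum_congr rfl fun i hi => ?_
        have : jj - i + 1 = jj + 1 - i := by
          have := Finset.mem_range.1 hi; omega
        rw [this, Finset.sum_add_distrib]
      rw [← hval]
      exact hder.congr (fun t _ => hfun t) (hfun x)

/-- for a fundamental system `f` of `y^{(n)} = a_1 y^{(n-1)} + ⋯ + a_n y`
with `(m-1)`-times continuously differentiable `a`, the matrix `Y_f` is `m`-times
continuously differentiable and `Y_f^{(j)} = Y_f · B_j(X_a,…,X_a^{(j-1)})` on `I`
for `0 ≤ j ≤ m`. -/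
theorem stmt_3 (n m : ℕ) (hn : 0 < n) (hm : 0 < m) (I : Set ℝ) (hIo : IsOpen I)
    (hIne : I.Nonempty) (hIc : I.OrdConnected) (a f : ℝ → Fin n → ℝ)
    (ha : ∀ i : Fin n, ContDiffOn ℝ ((m - 1 : ℕ) : ℕ∞) (fun t => a t i) I)
    (hf : FundSystem I a f) :
    (∀ p q : Fin n, ContDiffOn ℝ ((m : ℕ) : ℕ∞) (fun t => Yfun I f t p q) I) ∧
      ∀ j ≤ m, ∀ x ∈ I, matD I (Yfun I f) j x = Yfun I f x * BellD I (colMat a) j x := by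
  classical
  have hI : UniqueDiffOn ℝ I := hIo.uniqueDiffOn
  obtain ⟨hsol, -⟩ := hf
  -- Regularity of each component of f
  have hreg : ∀ p : Fin n, ContDiffOn ℝ ((n - 1 + m : ℕ)) (fun t => f t p) I := by
    intro p
    obtain ⟨hdiff, hode⟩ := hsol p
    have base : ContDiffOn ℝ ((n - 1 : ℕ)) (fun t => f t p) I := by
      have h0 := contDiffOn_of_differentiableOn_deriv (𝕜 := ℝ) (n := ((n - 1 : ℕ) : ℕ∞))
        (f := fun t => f t p) (s := I) ?_
      · exact_mod_cast h0
      · intro k hk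
        have hk' : k ≤ n - 1 := by exact_mod_cast hk
        exact hdiff k (by omega)
    have boot : ∀ j, j ≤ m → ContDiffOn ℝ ((n - 1 + j : ℕ)) (fun t => f t p) I := by
      intro j
      induction j with
      | zero => intro _; simpa using base
      | succ j IHj =>
        intro hj
        have prev : ContDiffOn ℝ ((n - 1 + j : ℕ)) (fun t => f t p) I := IHj (by omega)
        apply splitCD hI (n - 1) (j + 1) base
        rw [show (((j + 1 : ℕ)) : WithTop ℕ∞) = ((j : ℕ) : WithTop ℕ∞) + 1 by push_cast; ring]
        rw [contDiffOn_succ_iff_derivWithin hI]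
        refine ⟨hdiff (n - 1) (by omega), by simp, ?_⟩
        have heq : Set.EqOn
            (fun x => ∑ i : Fin n, a x i * iteratedDerivWithin (n - 1 - (i : ℕ)) (fun t => f t p) I x)
            (derivWithin (iteratedDerivWithin (n - 1) (fun t => f t p) I) I) I := by
          intro x hx
          rw [← iteratedDerivWithin_succ, show n - 1 + 1 = n by omega]
          exact (hode x hx).symm
        refine ContDiffOn.congr ?_ heq.symm
        apply ContDiffOn.sum
        intro i _
        refine ContDiffOn.mul ((ha i).of_le ?_) (iterCD hI (n - 1 - (i : ℕ)) j (prev.of_le ?_))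
        · exact_mod_cast (by omega : j ≤ m - 1)
        · exact_mod_cast (by omega : n - 1 - (i : ℕ) + j ≤ n - 1 + j)
    exact boot m le_rfl
  -- Smoothness of the entries of Y
  have hYsm : ∀ p q : Fin n, ContDiffOn ℝ ((m : ℕ)) (fun t => Yfun I f t p q) I := by
    intro p q
    show ContDiffOn ℝ ((m : ℕ)) (iteratedDerivWithin (n - 1 - (q : ℕ)) (fun t => f t p) I) I
    exact iterCD hI (n - 1 - (q : ℕ)) m
      ((hreg p).of_le (by exact_mod_cast (by omega : n - 1 - (q : ℕ) + m ≤ n - 1 + m)))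
  refine ⟨fun p q => by exact_mod_cast hYsm p q, ?_⟩
  -- derivative of iterated derivatives of components
  have hstep : ∀ (p : Fin n) (k : ℕ), k < n - 1 + m → ∀ x ∈ I,
      HasDerivWithinAt (iteratedDerivWithin k (fun t => f t p) I)
        (iteratedDerivWithin (k + 1) (fun t => f t p) I x) I x := by
    intro p k hk x hx
    have hdw := ((hreg p).differentiableOn_iteratedDerivWithin (by exact_mod_cast hk) hI) x hx
    have h2 := hdw.hasDerivWithinAt
    rwa [← iteratedDerivWithin_succ] at h2
  -- Y' = Y * X
  have hYd : ∀ x ∈ I, ∀ p q : Fin n, HasDerivWithinAt (fun t => Yfun I f t p q)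
      ((Yfun I f x * colMat a x) p q) I x := by
    intro x hx p q
    show HasDerivWithinAt (iteratedDerivWithin (n - 1 - (q : ℕ)) (fun t => f t p) I)
      ((Yfun I f x * colMat a x) p q) I x
    have hqlt : (q : ℕ) < n := q.isLt
    rcases Nat.eq_zero_or_pos (q : ℕ) with hq0 | hqpos
    · have hval : (Yfun I f x * colMat a x) p q
          = iteratedDerivWithin n (fun t => f t p) I x := by
        rw [Matrix.mul_apply, (hsol p).2 x hx]
        refine Finset.sum_congr rfl fun k _ => ?_
        show Yfun I f x p k * colMat a x k q = _
        rw [show colMat a x k q = a x k by simp [colMat, hq0]]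
        rw [mul_comm]
        rfl
      rw [hval, hq0, Nat.sub_zero, show n = (n - 1) + 1 by omega]
      exact hstep p (n - 1) (by omega) x hx
    · have hval : (Yfun I f x * colMat a x) p q
          = iteratedDerivWithin (n - 1 - (q : ℕ) + 1) (fun t => f t p) I x := by
        rw [Matrix.mul_apply]
        rw [Finset.sum_eq_single (⟨(q : ℕ) - 1, by omega⟩ : Fin n)]
        · show Yfun I f x p _ * colMat a x _ q = _
          rw [show colMat a x (⟨(q : ℕ) - 1, by omega⟩ : Fin n) q = 1 by
            simp only [colMat, Matrix.of_apply]
            rw [if_neg (by omega), if_pos (by omega)]]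
          rw [mul_one]
          show iteratedDerivWithin (n - 1 - ((q : ℕ) - 1)) (fun t => f t p) I x = _
          congr 1
          omega
        · intro k _ hkne
          have : colMat a x k q = 0 := by
            simp only [colMat, Matrix.of_apply]
            rw [if_neg (by omega), if_neg]
            intro hcon
            exact hkne (by ext; simp; omega)
          rw [this, mul_zero]
        · intro hcon
          exact absurd (Finset.mem_univ _) hcon
      rw [hval]
      exact hstep p (n - 1 - (q : ℕ)) (by omega) x hx
  -- smoothness of entries of X = colMat a
  have hXsm : ∀ p q : Fin n, ContDiffOn ℝ ((m - 1 : ℕ)) (fun t => colMat a t p q) I := by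
    intro p q
    by_cases hq : (q : ℕ) = 0
    · have he : (fun t => colMat a t p q) = fun t => a t p := by
        funext t; simp [colMat, hq]
      rw [he]; exact_mod_cast ha p
    · have : (fun t => colMat a t p q) = fun _ => colMat a 0 p q := by
        funext t; simp [colMat, hq]
      rw [this]; exact contDiffOn_const
  -- derivative of matD entries
  have hMd : ∀ (i : ℕ), i + 1 ≤ m - 1 → ∀ x ∈ I, ∀ p q : Fin n,
      HasDerivWithinAt (fun t => matD I (colMat a) i t p q)
        (matD I (colMat a) (i + 1) x p q) I x := by
    intro i hi x hx p q
    show HasDerivWithinAt (iteratedDerivWithin i (fun t => colMat a t p q) I)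
      (iteratedDerivWithin (i + 1) (fun t => colMat a t p q) I x) I x
    have hdw := ((hXsm p q).differentiableOn_iteratedDerivWithin
      (by exact_mod_cast (by omega : i < m - 1)) hI) x hx
    have h2 := hdw.hasDerivWithinAt
    rwa [← iteratedDerivWithin_succ] at h2
  -- main induction
  intro j hj
  induction j with
  | zero =>
    intro x hx
    ext p q
    show iteratedDerivWithin 0 (fun t => Yfun I f t p q) I x = (Yfun I f x * BellD I (colMat a) 0 x) p q
    rw [iteratedDerivWithin_zero]
    have : BellD I (colMat a) 0 x = 1 := by
      show belN (fun i => matD I (colMat a) i x) 0 = 1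
      exact belN_zero _
    rw [this, Matrix.mul_one]
  | succ j IHj =>
    intro x hx
    have hjm : j ≤ m := by omega
    have IH := IHj hjm
    have hBder := belN_hasDeriv I (fun t i => matD I (colMat a) i t) x j
      (fun i hi p q => hMd i (by omega) x hx p q)
    ext p q
    set M : ℝ → ℕ → Matrix (Fin n) (Fin n) ℝ := fun t i => matD I (colMat a) i t with hM
    have hprod : HasDerivWithinAt
        (fun t => ∑ k : Fin n, Yfun I f t p k * belN (M t) j k q)
        (∑ k : Fin n, ((Yfun I f x * colMat a x) p k * belN (M x) j k q
          + Yfun I f x p k * ((belN (M x) (j + 1) - M x 0 * belN (M x) j) k q))) I x :=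
      HasDerivWithinAt.fun_sum fun k _ => (hYd x hx p k).mul (hBder k q)
    have heq : ∀ t ∈ I, iteratedDerivWithin j (fun u => Yfun I f u p q) I t
        = ∑ k : Fin n, Yfun I f t p k * belN (M t) j k q := by
      intro t ht
      have h := congrArg (fun A : Matrix (Fin n) (Fin n) ℝ => A p q) (IH t ht)
      simp only [Matrix.mul_apply] at h
      exact h
    have hD : HasDerivWithinAt (iteratedDerivWithin j (fun u => Yfun I f u p q) I)
        (∑ k : Fin n, ((Yfun I f x * colMat a x) p k * belN (M x) j k q
          + Yfun I f x p k * ((belN (M x) (j + 1) - M x 0 * belN (M x) j) k q))) I x :=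
      hprod.congr heq (heq x hx)
    show iteratedDerivWithin (j + 1) (fun u => Yfun I f u p q) I x
      = (Yfun I f x * BellD I (colMat a) (j + 1) x) p q
    rw [iteratedDerivWithin_succ, hD.derivWithin (hI x hx)]
    -- final algebra
    have hM0 : M x 0 = colMat a x := by
      ext p' q'
      show iteratedDerivWithin 0 (fun t => colMat a t p' q') I x = _
      rw [iteratedDerivWithin_zero]
    have hBD : BellD I (colMat a) (j + 1) x = belN (M x) (j + 1) := rfl
    rw [hBD, hM0]
    simp only [Matrix.sub_apply, mul_sub, Finset.sum_add_distrib, Finset.sum_sub_distrib,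
      ← Matrix.mul_apply]
    rw [Matrix.mul_assoc]
    ring
end

section
/- Let n, m ∈ ℕ, let a = (a_1, ..., a_n) : I → ℝ^n be an (m−1)-times continuously differentiable function, and let f : I → ℝ^n be a fundamental system of solutions of y^{(n)} = a_1 y^{(n-1)} + ... + a_n y. Define X_a := (a | e_1 | ... | e_{n-1}) and Y_f := (f^{(n-1)} | ... | f' | f). Then for every ℓ ∈ {0, ..., m+n−1} and every i with max(ℓ−n+1, 0) ≤ i ≤ min(ℓ, m), one has f^{(ℓ)} = Y_f · B_i(X_a, X_a', ..., X_a^{(i-1)}) · e_{n+i−ℓ} on I. -/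
open Matrix

/-! The differential equation says exactly that the matrix `Y = (f^{(n-1)} | … | f' | f)`
satisfies `Y' = Y X_a` on `I`: column `q > 0` of `Y X_a` is column `q - 1` of `Y`, and column `0`
is `∑ a_r f^{(n-1-r)} = f^{(n)}`. Differentiating `Y^{(i)} = Y B_i(X_a, …, X_a^{(i-1)})` once more,
`Y^{(i+1)} = (Y X_a)^{(i)}` expands by the Leibniz rule into `∑_j C(i,j) Y^{(j)} X_a^{(i-j)}`,
which is exactly the recursion defining `B_{i+1}`. The column `n + i - ℓ` of `Y^{(i)}` is
`f^{(ℓ)}`. The same identity `Y' = Y X_a` bootstraps the regularity of `Y` needed for the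
Leibniz rule. -/

open Finset

theorem iteratedDerivWithin_iteratedDerivWithin {𝕜 F : Type*} [NontriviallyNormedField 𝕜]
    [NormedAddCommGroup F] [NormedSpace 𝕜 F] {s : Set 𝕜} (f : 𝕜 → F) (j k : ℕ) :
    iteratedDerivWithin j (iteratedDerivWithin k f s) s = iteratedDerivWithin (j + k) f s := by
  have hk : iteratedDerivWithin k f s = (fun g : 𝕜 → F => derivWithin g s)^[k] f :=
    funext fun _ => iteratedDerivWithin_eq_iterate
  ext x
  rw [iteratedDerivWithin_eq_iterate, iteratedDerivWithin_eq_iterate, Function.iterate_add_apply,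
    hk]

theorem Bell_succ_eq_sum_range {n : ℕ} (M : ℕ → Matrix (Fin n) (Fin n) ℝ) (k : ℕ) :
    Bell (k + 1) (fun i : Fin (k + 1) => M i) =
      ∑ j ∈ range (k + 1),
        (k.choose j : ℝ) • (Bell j (fun i : Fin j => M i) * M (k - j)) := by
  rw [Bell]
  exact Fin.sum_univ_eq_sum_range (fun j => (k.choose j : ℝ) •
    (Bell j (fun i : Fin j => M i) * M (k - j))) (k + 1)

section MatrixDerivatives

variable {n : ℕ} {s : Set ℝ}

theorem matD_succ (X : ℝ → Matrix (Fin n) (Fin n) ℝ) (k : ℕ) :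
    matD s X (k + 1) = matD s (matD s X 1) k := by
  ext x p q
  simp [matD, iteratedDerivWithin_succ']

theorem matD_congr {X Y : ℝ → Matrix (Fin n) (Fin n) ℝ} (h : Set.EqOn X Y s) (k : ℕ) :
    Set.EqOn (matD s X k) (matD s Y k) s := by
  intro x hx
  ext p q
  exact iteratedDerivWithin_congr (fun t ht => congrFun₂ (h ht) p q) hx

theorem matD_mul (hs : UniqueDiffOn ℝ s) {A B : ℝ → Matrix (Fin n) (Fin n) ℝ} {k : ℕ}
    (hA : ∀ p q, ContDiffOn ℝ k (fun t => A t p q) s)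
    (hB : ∀ p q, ContDiffOn ℝ k (fun t => B t p q) s) {x : ℝ} (hx : x ∈ s) :
    matD s (fun t => A t * B t) k x =
      ∑ j ∈ range (k + 1), (k.choose j : ℝ) • (matD s A j x * matD s B (k - j) x) := by
  ext p q
  simp only [matD, of_apply, mul_apply, Matrix.sum_apply, Matrix.smul_apply, smul_eq_mul]
  rw [iteratedDerivWithin_fun_sum hx hs fun r _ => ((hA p r).mul (hB r q)) x hx]
  simp_rw [mul_sum]
  rw [sum_comm]
  refine sum_congr rfl fun r _ => ?_
  rw [← Pi.mul_def, iteratedDerivWithin_mul hx hs ((hA p r) x hx) ((hB r q) x hx)]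
  simp only [mul_assoc]

theorem BellD_succ (X : ℝ → Matrix (Fin n) (Fin n) ℝ) (k : ℕ) (x : ℝ) :
    BellD s X (k + 1) x =
      ∑ j ∈ range (k + 1), (k.choose j : ℝ) • (BellD s X j x * matD s X (k - j) x) :=
  Bell_succ_eq_sum_range (fun i => matD s X i x) k

end MatrixDerivatives

theorem mulVec_stdB {n : ℕ} (M : Matrix (Fin n) (Fin n) ℝ) (q : Fin n) :
    M *ᵥ stdB n (q + 1) = fun p => M p q := by
  have : stdB n (q + 1) = Pi.single q 1 := by
    ext r
    simp [stdB, Pi.single_apply, Fin.ext_iff]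
  rw [this, mulVec_single_one]
  rfl

section WronskiMatrix

variable {n : ℕ} {s : Set ℝ} {a f : ℝ → Fin n → ℝ}

theorem colMat_contDiffOn {k : WithTop ℕ∞} (ha : ∀ i, ContDiffOn ℝ k (fun t => a t i) s)
    (p q : Fin n) : ContDiffOn ℝ k (fun t => colMat a t p q) s := by
  by_cases hq : (q : ℕ) = 0
  · simpa [colMat, hq] using ha p
  · simp only [colMat, of_apply, if_neg hq]
    exact contDiffOn_const

theorem matD_Yfun (k : ℕ) (x : ℝ) :
    matD s (Yfun s f) k x =
      of fun p (q : Fin n) => iteratedDerivWithin (k + (n - 1 - q)) (fun t => f t p) s x := by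
  ext p q
  exact congrFun (iteratedDerivWithin_iteratedDerivWithin _ k _) x

theorem Yfun_mul_colMat {x : ℝ}
    (hode : ∀ p, iteratedDerivWithin n (fun t => f t p) s x =
      ∑ i : Fin n, a x i * iteratedDerivWithin (n - 1 - i) (fun t => f t p) s x) :
    Yfun s f x * colMat a x =
      of fun p (q : Fin n) => iteratedDerivWithin (n - q) (fun t => f t p) s x := by
  ext p q
  rw [mul_apply, of_apply]
  by_cases hq : (q : ℕ) = 0
  · simp only [Yfun, colMat, of_apply, hq, if_true, Nat.sub_zero, hode p]
    exact sum_congr rfl fun _ _ => mul_comm _ _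
  · have hq' : (q : ℕ) - 1 < n := by omega
    rw [Fintype.sum_eq_single ⟨q - 1, hq'⟩]
    · simp [Yfun, colMat, hq, show (q : ℕ) - 1 + 1 = q by omega,
        show n - 1 - (q - 1) = n - q by omega]
    · intro r hr
      have : (r : ℕ) + 1 ≠ q := fun h => hr (Fin.ext (by simp; omega))
      simp [colMat, hq, this]

theorem matD_Yfun_one (hf : ∀ p, SolvesDE s a fun t => f t p) {x : ℝ} (hx : x ∈ s) :
    matD s (Yfun s f) 1 x = Yfun s f x * colMat a x := by
  rw [matD_Yfun, Yfun_mul_colMat fun p => (hf p).2 x hx]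
  ext p q
  simp only [of_apply]
  congr 1
  omega

theorem Yfun_contDiffOn_succ (hs : UniqueDiffOn ℝ s) (hf : ∀ p, SolvesDE s a fun t => f t p)
    {k : ℕ} (hY : ∀ p q, ContDiffOn ℝ k (fun t => Yfun s f t p q) s)
    (ha : ∀ i, ContDiffOn ℝ k (fun t => a t i) s) (p q : Fin n) :
    ContDiffOn ℝ (k + 1) (fun t => Yfun s f t p q) s := by
  have hderiv : Set.EqOn (derivWithin (fun t => Yfun s f t p q) s)
      (fun t => ∑ r, Yfun s f t p r * colMat a t r q) s := fun x hx => by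
    simpa [matD, mul_apply] using congrFun₂ (matD_Yfun_one hf hx) p q
  refine (contDiffOn_succ_iff_derivWithin hs).2 ⟨(hf p).1 _ (by omega), by simp, ?_⟩
  exact (ContDiffOn.sum fun r _ => (hY p r).mul (colMat_contDiffOn ha r q)).congr hderiv

theorem Yfun_contDiffOn (hs : UniqueDiffOn ℝ s) (hf : ∀ p, SolvesDE s a fun t => f t p)
    {k : ℕ} (ha : ∀ i, ContDiffOn ℝ k (fun t => a t i) s) (p q : Fin n) :
    ContDiffOn ℝ (k + 1) (fun t => Yfun s f t p q) s := by
  induction k generalizing p q with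
  | zero =>
    refine Yfun_contDiffOn_succ hs hf (fun p q => ?_) ha p q
    exact contDiffOn_zero.2 ((hf p).1 _ (by omega)).continuousOn
  | succ k ih =>
    exact Yfun_contDiffOn_succ hs hf (ih fun i => (ha i).of_le (by simp)) ha p q

theorem matD_Yfun_eq_mul_BellD (hs : UniqueDiffOn ℝ s)
    (hf : ∀ p, SolvesDE s a fun t => f t p) {k : ℕ}
    (ha : ∀ i, ContDiffOn ℝ k (fun t => a t i) s) {j : ℕ} (hj : j ≤ k + 1) {x : ℝ}
    (hx : x ∈ s) :
    matD s (Yfun s f) j x = Yfun s f x * BellD s (colMat a) j x := by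
  induction j using Nat.strong_induction_on with
  | _ j ih =>
    rcases j with _ | j
    · ext p q
      simp [matD, Yfun, BellD, Bell]
    have hY : ∀ p q, ContDiffOn ℝ j (fun t => Yfun s f t p q) s := fun p q =>
      (Yfun_contDiffOn hs hf ha p q).of_le (by exact_mod_cast (by omega : j ≤ k + 1))
    have hX : ∀ p q, ContDiffOn ℝ j (fun t => colMat a t p q) s :=
      colMat_contDiffOn fun i => (ha i).of_le (by exact_mod_cast (by omega : j ≤ k))
    calc matD s (Yfun s f) (j + 1) x
        = matD s (fun t => Yfun s f t * colMat a t) j x := by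
          rw [matD_succ]
          exact matD_congr (fun t ht => matD_Yfun_one hf ht) j hx
      _ = ∑ i ∈ range (j + 1), (j.choose i : ℝ) •
            (Yfun s f x * BellD s (colMat a) i x * matD s (colMat a) (j - i) x) := by
          rw [matD_mul hs hY hX hx]
          refine sum_congr rfl fun i hi => ?_
          rw [ih i (by simp at hi; omega) (by simp at hi; omega)]
      _ = Yfun s f x * BellD s (colMat a) (j + 1) x := by
          simp [BellD_succ, mul_sum, Matrix.mul_assoc]

end WronskiMatrix

theorem stmt_4_general (n m : ℕ) (I : Set ℝ) (hIo : IsOpen I)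
    (a f : ℝ → Fin n → ℝ)
    (ha : ∀ i : Fin n, ContDiffOn ℝ ((m - 1 : ℕ) : ℕ∞) (fun t => a t i) I)
    (hf : FundSystem I a f) :
    ∀ ℓ ≤ m + n - 1, ∀ i : ℕ, ℓ + 1 - n ≤ i → i ≤ ℓ → i ≤ m → ∀ x ∈ I,
      (fun p => iteratedDerivWithin ℓ (fun t => f t p) I x) =
        (Yfun I f x * BellD I (colMat a) i x).mulVec (stdB n (n + i - ℓ)) := by
  intro ℓ _ i hlow hiℓ him x hx
  have hq : n + i - ℓ - 1 < n := by omega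
  have hcol : n + i - ℓ = ((⟨n + i - ℓ - 1, hq⟩ : Fin n) : ℕ) + 1 := by simp; omega
  rw [hcol, mulVec_stdB, ← matD_Yfun_eq_mul_BellD hIo.uniqueDiffOn hf.1 ha (by omega) hx,
    matD_Yfun]
  ext p
  simp only [of_apply]
  congr 1
  omega

/-- for a fundamental system `f` of `y^{(n)} = a_1 y^{(n-1)} + ⋯ + a_n y`,
for every `ℓ ≤ m+n-1` and every `i` with `max(ℓ-n+1,0) ≤ i ≤ min(ℓ,m)`,
`f^{(ℓ)} = Y_f · B_i(X_a,…,X_a^{(i-1)}) · e_{n+i-ℓ}` on `I`. -/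
theorem stmt_4 (n m : ℕ) (hn : 0 < n) (hm : 0 < m) (I : Set ℝ) (hIo : IsOpen I)
    (hIne : I.Nonempty) (hIc : I.OrdConnected) (a f : ℝ → Fin n → ℝ)
    (ha : ∀ i : Fin n, ContDiffOn ℝ ((m - 1 : ℕ) : ℕ∞) (fun t => a t i) I)
    (hf : FundSystem I a f) :
    ∀ ℓ ≤ m + n - 1, ∀ i : ℕ, ℓ + 1 - n ≤ i → i ≤ ℓ → i ≤ m → ∀ x ∈ I,
      (fun p => iteratedDerivWithin ℓ (fun t => f t p) I x) =
        (Yfun I f x * BellD I (colMat a) i x).mulVec (stdB n (n + i - ℓ)) :=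
  stmt_4_general n m I hIo a f ha hf
end

section
/- Let n ∈ ℕ, let a = (a_1, ..., a_n) : I → ℝ^n be continuous, and let f : I → ℝ^n be a fundamental system of solutions of y^{(n)} = a_1 y^{(n-1)} + ... + a_n y. Then for every j ∈ {0, ..., n−1}, one has on I: W_f^{(n, n−1, ..., j+1, j−1, ..., 1, 0)} = (−1)^{n−j−1} · W_f · a_{n−j}, where the multi-index consists of n followed by the integers n−1 down to 0 with j omitted. -/
/-!
Each component of `f` satisfies `f^{(n)} = ∑ᵢ a_{i+1} f^{(n-1-i)}`, so the first column
`f^{(n)}` of the generalized Wronskian is a combination of the derivatives `f^{(n-1)}, …, f`.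
All of these except `f^{(j)}` already occur among the remaining columns, so by
multilinearity only the term `a_{n-j} f^{(j)}` survives. Moving `f^{(j)}` from the first
column to its place in `W_f` is a cycle of length `n - j`, which contributes the sign
`(-1)^{n-j-1}`.
-/

open Matrix

open Equiv

theorem genW_update_of_eq_sum {n N : ℕ} {I : Set ℝ} {f : ℝ → Fin n → ℝ} {k : Fin n → ℕ}
    {c : Fin n → ℝ} {x : ℝ}
    (h : ∀ p, iteratedDerivWithin N (fun t => f t p) I x =
      ∑ i, c i * iteratedDerivWithin (k i) (fun t => f t p) I x) (q : Fin n) :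
    genW I f (Function.update k q N) x = c q * genW I f k x := by
  set M : Matrix (Fin n) (Fin n) ℝ :=
    of fun p r => iteratedDerivWithin (k r) (fun t => f t p) I x
  have hcol : (of fun p r => iteratedDerivWithin (Function.update k q N r) (fun t => f t p) I x) =
      M.updateCol q fun p => ∑ i, c i • M p i := by
    ext p r
    rcases eq_or_ne r q with rfl | hr
    · simp [M, h]
    · simp [M, hr]
  rw [genW, hcol, det_updateCol_sum, smul_eq_mul, genW]

theorem genW_comp_perm {n : ℕ} (I : Set ℝ) (f : ℝ → Fin n → ℝ) (k : Fin n → ℕ)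
    (σ : Perm (Fin n)) (x : ℝ) :
    genW I f (k ∘ σ) x = Perm.sign σ * genW I f k x :=
  det_permute' σ (of fun p q => iteratedDerivWithin (k q) (fun t => f t p) I x)

theorem dIdx_zero_eq_update_wIdx_comp {N j : ℕ} (hj : j ≤ N) :
    dIdx (N + 1) 0 j = Function.update
      (wIdx (N + 1) ∘ (Fin.cycleRange (⟨N - j, by omega⟩ : Fin (N + 1))).symm) 0 (N + 1) := by
  funext q
  refine Fin.cases ?_ (fun r => ?_) q
  · simp [dIdx]
  · rw [Function.update_of_ne (Fin.succ_ne_zero r), Function.comp_apply,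
      Fin.cycleRange_symm_succ, Fin.succAbove]
    simp only [dIdx, wIdx, Fin.lt_def, Fin.val_castSucc, Fin.val_succ]
    split_ifs <;> simp_all <;> omega

theorem stmt_7_general (n : ℕ) (I : Set ℝ) (a f : ℝ → Fin n → ℝ)
    (hf : FundSystem I a f) :
    ∀ j < n, ∀ x ∈ I,
      genW I f (dIdx n 0 j) x =
        (-1 : ℝ) ^ (n - j - 1) * genW I f (wIdx n) x * aExt a (n - j) x := by
  intro j hj x hx
  obtain ⟨N, rfl⟩ : ∃ N, n = N + 1 := ⟨n - 1, by omega⟩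
  set m : Fin (N + 1) := ⟨N - j, by omega⟩
  have hode : ∀ p, iteratedDerivWithin (N + 1) (fun t => f t p) I x =
      ∑ i, a x (m.cycleRange.symm i) *
        iteratedDerivWithin ((wIdx (N + 1) ∘ m.cycleRange.symm) i) (fun t => f t p) I x :=
    fun p => ((hf.1 p).2 x hx).trans
      (Equiv.sum_comp m.cycleRange.symm fun i =>
        a x i * iteratedDerivWithin (wIdx (N + 1) i) (fun t => f t p) I x).symm
  have haExt : aExt a (N + 1 - j) x = a x m := by
    simp only [aExt, dif_pos (by omega : N + 1 - j - 1 < N + 1)]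
    congr 2
    omega
  rw [dIdx_zero_eq_update_wIdx_comp (by omega), genW_update_of_eq_sum hode, genW_comp_perm,
    Perm.sign_symm, Fin.sign_cycleRange, Fin.cycleRange_symm_zero, haExt,
    show N + 1 - j - 1 = N - j by omega]
  push_cast
  ring

/-- for a fundamental system `f` of `y^{(n)} = a_1 y^{(n-1)} + ⋯ + a_n y`,
`W_f^{(n,n-1,…,j+1,j-1,…,0)} = (-1)^{n-j-1} W_f a_{n-j}` on `I` for `0 ≤ j ≤ n-1`. -/
theorem stmt_7 (n : ℕ) (hn : 0 < n) (I : Set ℝ) (hIo : IsOpen I) (hIne : I.Nonempty)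
    (hIc : I.OrdConnected) (a f : ℝ → Fin n → ℝ)
    (ha : ∀ i : Fin n, ContinuousOn (fun t => a t i) I)
    (hf : FundSystem I a f) :
    ∀ j < n, ∀ x ∈ I,
      genW I f (dIdx n 0 j) x =
        (-1 : ℝ) ^ (n - j - 1) * genW I f (wIdx n) x * aExt a (n - j) x :=
  stmt_7_general n I a f hf
end

section
/- Let n ∈ ℕ, let a = (a_1, ..., a_n) : I → ℝ^n be twice continuously differentiable, and let f : I → ℝ^n be a fundamental system of solutions of y^{(n)} = a_1 y^{(n-1)} + ... + a_n y. Then for every j ∈ {0, ..., n−1}, one has on I: W_f^{(n+2, n−1, ..., j+1, j−1, ..., 1, 0)} = (−1)^{n−j−1} · W_f · (a_1² a_{n−j} + a_1 a_{n−j+1} + a_2 a_{n−j} + a_{n−j+2} + a_1 a_{n−j}' + 2 a_1' a_{n−j} + 2 a_{n−j+1}' + a_{n−j}''), where a_{n+1} := a_{n+2} := 0 and the multi-index consists of n+2 followed by the integers n−1 down to 0 with j omitted. -/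
open Matrix

/-!
Differentiating `y^{(n)} = ∑ₖ aₖ₊₁ y^{(n-1-k)}` and eliminating `y^{(n)}` each time writes
`y^{(n+2)} = ∑ₖ cₖ y^{(n-1-k)}` for every solution `y`, with the same coefficients `cₖ` for all
solutions. So the column `f^{(n+2)}` of the generalized Wronskian is `∑ₖ cₖ f^{(n-1-k)}`, and in the
determinant only the term of the omitted column `f^{(j)}` survives; moving that column back into
its place in `W_f` is a cyclic permutation of sign `(-1)^{n-j-1}`. Computing `c_{n-1-j}` gives the
stated polynomial in `a` and its derivatives.
-/

open Finset Set

theorem sum_range_mul_sub_eq {R : Type*} [Semiring R] {n : ℕ} (c u : ℕ → R) (hc : c n = 0) :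
    ∑ k ∈ range n, c k * u (n - k) =
      c 0 * u n + ∑ k ∈ range n, c (k + 1) * u (n - 1 - k) := by
  cases n with
  | zero => simp [hc]
  | succ m =>
    rw [sum_range_succ', sum_range_succ, hc]
    simp only [Nat.sub_zero, zero_mul, add_zero, Nat.add_sub_cancel]
    rw [add_comm]
    congr 1
    exact sum_congr rfl fun k hk => by congr 2; omega

section LinearODE

variable {n : ℕ} {I : Set ℝ} {a : ℝ → Fin n → ℝ}

theorem aExt_succ (i : Fin n) : aExt a (i + 1) = fun t => a t i := by
  funext t
  simp [aExt]

theorem aExt_eq_zero {i : ℕ} (hi : n < i) : aExt a i = 0 := by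
  funext t
  simp [aExt, show ¬ i - 1 < n by omega]

theorem contDiffOn_aExt {r : WithTop ℕ∞} (ha : ∀ i, ContDiffOn ℝ r (fun t => a t i) I) (i : ℕ) :
    ContDiffOn ℝ r (aExt a i) I := by
  unfold aExt
  by_cases hi : i - 1 < n
  · simpa only [hi, dite_true] using ha ⟨i - 1, hi⟩
  · simpa only [hi, dite_false] using contDiffOn_const

/-- The coefficients of the derivative of `∑ₖ cₖ y^{(n-1-k)}` for a solution `y`, after
eliminating `y^{(n)}` by the equation. -/
noncomputable def derivCoeff (a : ℝ → Fin n → ℝ) (c : ℕ → ℝ → ℝ) (k : ℕ) (t : ℝ) : ℝ :=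
  deriv (c k) t + c 0 t * aExt a (k + 1) t + c (k + 1) t

theorem derivCoeff_eq_zero {c : ℕ → ℝ → ℝ} (hc : ∀ k, n ≤ k → c k = 0) {k : ℕ} (hk : n ≤ k) :
    derivCoeff a c k = 0 := by
  funext t
  simp [derivCoeff, hc k hk, hc (k + 1) (by omega), aExt_eq_zero (a := a) (i := k + 1) (by omega)]

theorem SolvesDE.eqOn_iteratedDeriv {y : ℝ → ℝ} (hI : IsOpen I) (hy : SolvesDE I a y) :
    EqOn (iteratedDeriv n y)
      (fun t => ∑ k ∈ range n, aExt a (k + 1) t * iteratedDeriv (n - 1 - k) y t) I := by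
  intro t ht
  dsimp only
  rw [← iteratedDerivWithin_of_isOpen hI ht, hy.2 t ht, ← Fin.sum_univ_eq_sum_range]
  simp only [aExt_succ, iteratedDerivWithin_of_isOpen hI ht]

theorem SolvesDE.differentiableOn_iteratedDeriv {y : ℝ → ℝ} (hI : IsOpen I) (hy : SolvesDE I a y)
    {k : ℕ} (hk : k < n) : DifferentiableOn ℝ (iteratedDeriv k y) I :=
  (hy.1 k hk).congr fun _ ht => (iteratedDerivWithin_of_isOpen hI ht).symm

theorem SolvesDE.eqOn_iteratedDeriv_succ {y : ℝ → ℝ} {N : ℕ} {c : ℕ → ℝ → ℝ} (hI : IsOpen I)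
    (hy : SolvesDE I a y) (hc : ∀ k < n, DifferentiableOn ℝ (c k) I) (hcn : c n = 0)
    (hN : EqOn (iteratedDeriv N y)
      (fun t => ∑ k ∈ range n, c k t * iteratedDeriv (n - 1 - k) y t) I) :
    EqOn (iteratedDeriv (N + 1) y)
      (fun t => ∑ k ∈ range n, derivCoeff a c k t * iteratedDeriv (n - 1 - k) y t) I := by
  intro x hx
  have hyx : ∀ k < n, DifferentiableAt ℝ (iteratedDeriv k y) x := fun k hk =>
    (hy.differentiableOn_iteratedDeriv hI hk).differentiableAt (hI.mem_nhds hx)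
  have hcx : ∀ k < n, DifferentiableAt ℝ (c k) x := fun k hk =>
    (hc k hk).differentiableAt (hI.mem_nhds hx)
  calc iteratedDeriv (N + 1) y x
      = deriv (fun t => ∑ k ∈ range n, c k t * iteratedDeriv (n - 1 - k) y t) x := by
        rw [iteratedDeriv_succ, (hN.eventuallyEq_of_mem (hI.mem_nhds hx)).deriv_eq]
    _ = ∑ k ∈ range n, (deriv (c k) x * iteratedDeriv (n - 1 - k) y x
          + c k x * iteratedDeriv (n - k) y x) := by
        rw [deriv_fun_sum (A := fun k t => c k t * iteratedDeriv (n - 1 - k) y t)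
          fun k hk => (hcx k (mem_range.1 hk)).mul (hyx _ (by have := mem_range.1 hk; omega))]
        refine sum_congr rfl fun k hk => ?_
        have hk := mem_range.1 hk
        rw [deriv_fun_mul (hcx k hk) (hyx _ (by omega)), ← iteratedDeriv_succ,
          show n - 1 - k + 1 = n - k by omega]
    _ = _ := by
        dsimp only
        -- the `k = 0` term of the reindexed second sum is `c₀ y^{(n)}`, eliminated by the equation
        rw [sum_add_distrib, sum_range_mul_sub_eq (fun k => c k x) (fun k => iteratedDeriv k y x)
          (by simp [hcn]), hy.eqOn_iteratedDeriv hI hx]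
        simp only [derivCoeff, add_mul, sum_add_distrib, mul_sum, mul_assoc]
        ring

theorem differentiableOn_derivCoeff_aExt (hI : IsOpen I)
    (ha : ∀ i, ContDiffOn ℝ 2 (fun t => a t i) I) (k : ℕ) :
    DifferentiableOn ℝ (derivCoeff a (fun k => aExt a (k + 1)) k) I := by
  have hA := contDiffOn_aExt ha
  exact ((((hA (k + 1)).deriv_of_isOpen hI (m := 1) (by norm_num)).differentiableOn
    one_ne_zero).add (((hA 1).differentiableOn two_ne_zero).mul
    ((hA (k + 1)).differentiableOn two_ne_zero))).add ((hA (k + 2)).differentiableOn two_ne_zero)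

theorem SolvesDE.eqOn_iteratedDeriv_add_two {y : ℝ → ℝ} (hI : IsOpen I)
    (ha : ∀ i, ContDiffOn ℝ 2 (fun t => a t i) I) (hy : SolvesDE I a y) :
    EqOn (iteratedDeriv (n + 2) y)
      (fun t => ∑ k ∈ range n, derivCoeff a (derivCoeff a fun k => aExt a (k + 1)) k t *
        iteratedDeriv (n - 1 - k) y t) I := by
  have hvanish : ∀ k, n ≤ k → aExt a (k + 1) = 0 := fun k hk => aExt_eq_zero (by omega)
  refine hy.eqOn_iteratedDeriv_succ hI (fun k _ => differentiableOn_derivCoeff_aExt hI ha k)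
    (derivCoeff_eq_zero hvanish le_rfl) ?_
  exact hy.eqOn_iteratedDeriv_succ hI
    (fun k _ => ((contDiffOn_aExt ha (k + 1)).differentiableOn two_ne_zero)) (hvanish n le_rfl)
    (hy.eqOn_iteratedDeriv hI)

theorem derivCoeff_derivCoeff_aExt (hI : IsOpen I) (ha : ∀ i, ContDiffOn ℝ 2 (fun t => a t i) I)
    {x : ℝ} (hx : x ∈ I) (k : ℕ) :
    derivCoeff a (derivCoeff a fun k => aExt a (k + 1)) k x =
      aExt a 1 x ^ 2 * aExt a (k + 1) x + aExt a 1 x * aExt a (k + 2) x +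
        aExt a 2 x * aExt a (k + 1) x + aExt a (k + 3) x +
        aExt a 1 x * deriv (aExt a (k + 1)) x + 2 * deriv (aExt a 1) x * aExt a (k + 1) x +
        2 * deriv (aExt a (k + 2)) x + deriv (deriv (aExt a (k + 1))) x := by
  have hA i : DifferentiableAt ℝ (aExt a i) x :=
    ((contDiffOn_aExt ha i).differentiableOn two_ne_zero).differentiableAt (hI.mem_nhds hx)
  have hA' i : DifferentiableAt ℝ (deriv (aExt a i)) x :=
    (((contDiffOn_aExt ha i).deriv_of_isOpen hI (m := 1) (by norm_num)).differentiableOn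
      one_ne_zero).differentiableAt (hI.mem_nhds hx)
  have hcoeff : ∀ k, derivCoeff a (fun k => aExt a (k + 1)) k =
      fun t => deriv (aExt a (k + 1)) t + aExt a 1 t * aExt a (k + 1) t + aExt a (k + 2) t :=
    fun _ => rfl
  have hderiv : deriv (derivCoeff a (fun k => aExt a (k + 1)) k) x =
      deriv (deriv (aExt a (k + 1))) x + (deriv (aExt a 1) x * aExt a (k + 1) x +
        aExt a 1 x * deriv (aExt a (k + 1)) x) + deriv (aExt a (k + 2)) x := by
    rw [hcoeff]
    exact (((hA' _).hasDerivAt.add ((hA _).hasDerivAt.mul (hA _).hasDerivAt)).add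
      (hA _).hasDerivAt).deriv
  rw [derivCoeff, hderiv, hcoeff, hcoeff]
  ring

end LinearODE

theorem det_dIdx_eq {R : Type*} [CommRing R] {n d j : ℕ} (hj : j < n) (v : ℕ → Fin n → R)
    (c : ℕ → R) (hv : v (n + d) = ∑ k ∈ range n, c k • v (n - 1 - k)) :
    (Matrix.of fun p q => v (dIdx n d j q) p).det =
      (-1) ^ (n - j - 1) * c (n - 1 - j) * (Matrix.of fun p q => v (wIdx n q) p).det := by
  obtain ⟨m, rfl⟩ : ∃ m, n = m + 1 := ⟨n - 1, by omega⟩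
  set W : Matrix (Fin (m + 1)) (Fin (m + 1)) R := Matrix.of fun p q => v (wIdx (m + 1) q) p
  set i₀ : Fin (m + 1) := ⟨m - j, by omega⟩
  -- `σ` moves the column `v j` of `W` to the front and keeps the other columns in order
  set σ := i₀.cycleRange.symm
  have hcols : (Matrix.of fun p q => v (dIdx (m + 1) d j q) p) =
      (W.submatrix id σ).updateCol 0 fun p => ∑ q, c (σ q) • W.submatrix id σ p q := by
    ext p q
    cases q using Fin.cases with
    | zero =>
      rw [← Fin.sum_univ_eq_sum_range] at hv
      simp [W, σ, dIdx, wIdx, hv, Equiv.sum_comp σ (fun i => c i * v (m - i) p)]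
    | succ q =>
      simp only [W, σ, Matrix.updateCol_ne (Fin.succ_ne_zero q), Matrix.submatrix_apply,
        Matrix.of_apply, id_eq, Fin.cycleRange_symm_succ, dIdx, wIdx, Fin.succAbove]
      split_ifs <;> simp_all [Fin.lt_def, i₀, Nat.sub_sub] <;> omega
  rw [hcols, Matrix.det_updateCol_sum, Matrix.det_permute', Fin.cycleRange_symm_zero,
    show m + 1 - j - 1 = m - j by omega]
  simp [σ, i₀]
  ring

theorem stmt_9_general (n : ℕ) (I : Set ℝ) (hIo : IsOpen I) (a f : ℝ → Fin n → ℝ)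
    (ha : ∀ i : Fin n, ContDiffOn ℝ 2 (fun t => a t i) I)
    (hf : FundSystem I a f) :
    ∀ j < n, ∀ x ∈ I,
      genW I f (dIdx n 2 j) x =
        (-1 : ℝ) ^ (n - j - 1) * genW I f (wIdx n) x *
          (aExt a 1 x ^ 2 * aExt a (n - j) x + aExt a 1 x * aExt a (n - j + 1) x +
            aExt a 2 x * aExt a (n - j) x + aExt a (n - j + 2) x +
            aExt a 1 x * derivWithin (aExt a (n - j)) I x +
            2 * derivWithin (aExt a 1) I x * aExt a (n - j) x +
            2 * derivWithin (aExt a (n - j + 1)) I x +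
            iteratedDerivWithin 2 (aExt a (n - j)) I x) := by
  intro j hj x hx
  have hderiv k (g : ℝ → ℝ) : iteratedDerivWithin k g I x = iteratedDeriv k g x :=
    iteratedDerivWithin_of_isOpen hIo hx
  set v : ℕ → Fin n → ℝ := fun k p => iteratedDeriv k (fun t => f t p) x
  have hW k : genW I f k x = (Matrix.of fun p q => v (k q) p).det := by
    simp only [genW, hderiv, v]
  have hv : v (n + 2) = ∑ k ∈ range n,
      derivCoeff a (derivCoeff a fun k => aExt a (k + 1)) k x • v (n - 1 - k) := by
    ext p
    simp [v, (hf.1 p).eqOn_iteratedDeriv_add_two hIo ha hx]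
  rw [hW, hW, det_dIdx_eq hj v _ hv, derivCoeff_derivCoeff_aExt hIo ha hx,
    show n - 1 - j + 1 = n - j by omega, show n - 1 - j + 2 = n - j + 1 by omega,
    show n - 1 - j + 3 = n - j + 2 by omega, hderiv, derivWithin_of_isOpen hIo hx,
    derivWithin_of_isOpen hIo hx, derivWithin_of_isOpen hIo hx, iteratedDeriv_succ,
    iteratedDeriv_one]
  ring

/-- for a fundamental system `f` with twice continuously differentiable `a`,
`W_f^{(n+2,n-1,…,j+1,j-1,…,0)} = (-1)^{n-j-1} W_f (a_1² a_{n-j} + a_1 a_{n-j+1} + a_2 a_{n-j}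
+ a_{n-j+2} + a_1 a_{n-j}' + 2 a_1' a_{n-j} + 2 a_{n-j+1}' + a_{n-j}'')` on `I` for
`0 ≤ j ≤ n-1`, where `a_{n+1} := a_{n+2} := 0`. -/
theorem stmt_9 (n : ℕ) (hn : 0 < n) (I : Set ℝ) (hIo : IsOpen I) (hIne : I.Nonempty)
    (hIc : I.OrdConnected) (a f : ℝ → Fin n → ℝ)
    (ha : ∀ i : Fin n, ContDiffOn ℝ 2 (fun t => a t i) I)
    (hf : FundSystem I a f) :
    ∀ j < n, ∀ x ∈ I,
      genW I f (dIdx n 2 j) x =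
        (-1 : ℝ) ^ (n - j - 1) * genW I f (wIdx n) x *
          (aExt a 1 x ^ 2 * aExt a (n - j) x + aExt a 1 x * aExt a (n - j + 1) x +
            aExt a 2 x * aExt a (n - j) x + aExt a (n - j + 2) x +
            aExt a 1 x * derivWithin (aExt a (n - j)) I x +
            2 * derivWithin (aExt a 1) I x * aExt a (n - j) x +
            2 * derivWithin (aExt a (n - j + 1)) I x +
            iteratedDerivWithin 2 (aExt a (n - j)) I x) :=
  stmt_9_general n I hIo a f ha hf
end

section
/- Let f = (f_1, ..., f_n) : I → ℝ^n be an n-times continuously differentiable function such that its Wronskian W_f is nonvanishing on I. Then the components f_1, ..., f_n form a fundamental system of solutions of the n-th order homogeneous linear differential equation y^{(n)} = Σ_{j=0}^{n−1} Φ_f^{[j]} · y^{(j)} on I; that is, each f_i solves this equation and f_1, ..., f_n are linearly independent. -/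
/-!
Fix `p`. The `(n+1) × (n+1)` matrix whose rows are the jets `(f_p^{(n)}, …, f_p', f_p)` of `f_p`
and of `f_1, …, f_n` has a repeated row, so its determinant vanishes. Expanding it along the
first row expresses `f_p^{(n)} W_f` as the alternating sum of the `f_p^{(j)}` weighted by the
generalized Wronskians obtained by deleting the column of order `j`; dividing by `W_f` is the
differential equation. A linear relation among the `f_p` on `I` persists in all derivatives,
so at a point of `I` it is a vector in the left kernel of the Wronskian matrix, hence zero.
-/

open Matrix

theorem Matrix.sum_alternating_mul_det_submatrix_succAbove_eq_zero {R : Type*} [CommRing R]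
    {n : ℕ} (A : Matrix (Fin n) (Fin (n + 1)) R) (p : Fin n) :
    ∑ j : Fin (n + 1), (-1) ^ (j : ℕ) * A p j * (A.submatrix id j.succAbove).det = 0 := by
  have hdet : (A.submatrix (Fin.cons p id : Fin (n + 1) → Fin n) id).det = 0 :=
    det_zero_of_row_eq (Fin.succ_ne_zero p).symm (funext fun j => by simp)
  simpa only [det_succ_row_zero, submatrix_submatrix, Fin.cons_comp_succ, submatrix_apply,
    Fin.cons_zero, Function.id_comp, id_eq] using hdet

theorem sub_succAbove_zero_eq_wIdx (n : ℕ) :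
    (fun q : Fin n => n - ((0 : Fin (n + 1)).succAbove q : ℕ)) = wIdx n := by
  ext q
  simp only [Fin.succAbove_zero, Fin.val_succ, wIdx]
  omega

theorem sub_succAbove_succ_eq_dIdx {n : ℕ} (i : Fin n) :
    (fun q : Fin n => n - (i.succ.succAbove q : ℕ)) = dIdx n 0 (n - 1 - i) := by
  ext q
  rcases lt_or_ge i q with hiq | hqi
  · rw [Fin.succAbove_succ_of_lt _ _ hiq, Fin.val_succ]
    have := Fin.lt_def.1 hiq
    simp only [dIdx]
    split_ifs <;> omega
  · rw [Fin.succAbove_succ_of_le _ _ hqi, Fin.val_castSucc]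
    have := Fin.le_def.1 hqi
    simp only [dIdx]
    split_ifs <;> omega

noncomputable def jetMatrix {n : ℕ} (I : Set ℝ) (f : ℝ → Fin n → ℝ) (x : ℝ) :
    Matrix (Fin n) (Fin (n + 1)) ℝ :=
  of fun p c => iteratedDerivWithin (n - c) (fun t => f t p) I x

theorem det_submatrix_jetMatrix {n : ℕ} (I : Set ℝ) (f : ℝ → Fin n → ℝ) (x : ℝ)
    (σ : Fin n → Fin (n + 1)) :
    ((jetMatrix I f x).submatrix id σ).det = genW I f (fun q => n - σ q) x := rfl

theorem iteratedDerivWithin_mul_genW_wIdx {n : ℕ} (I : Set ℝ) (f : ℝ → Fin n → ℝ) (x : ℝ)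
    (p : Fin n) :
    iteratedDerivWithin n (fun t => f t p) I x * genW I f (wIdx n) x
      = ∑ i : Fin n, (-1) ^ (i : ℕ) * genW I f (dIdx n 0 (n - 1 - i)) x
          * iteratedDerivWithin (n - 1 - i) (fun t => f t p) I x := by
  have h := sum_alternating_mul_det_submatrix_succAbove_eq_zero (jetMatrix I f x) p
  simp only [Fin.sum_univ_succ, det_submatrix_jetMatrix, sub_succAbove_zero_eq_wIdx,
    sub_succAbove_succ_eq_dIdx] at h
  simp only [jetMatrix, of_apply, Fin.val_zero, Fin.val_succ, pow_succ] at h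
  rw [← sub_eq_zero, ← h, pow_zero, one_mul, Nat.sub_zero, sub_eq_add_neg,
    ← Finset.sum_neg_distrib]
  congr 1
  refine Finset.sum_congr rfl fun i _ => ?_
  rw [show n - (i + 1 : ℕ) = n - 1 - i by omega]
  ring

theorem iteratedDerivWithin_eq_sum_Phi_mul {n : ℕ} {I : Set ℝ} {f : ℝ → Fin n → ℝ} {x : ℝ}
    (hW : genW I f (wIdx n) x ≠ 0) (p : Fin n) :
    iteratedDerivWithin n (fun t => f t p) I x
      = ∑ i : Fin n,
          Phi I f (n - 1 - i) x * iteratedDerivWithin (n - 1 - i) (fun t => f t p) I x := by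
  rw [← mul_div_cancel_right₀ (iteratedDerivWithin n (fun t => f t p) I x) hW,
    iteratedDerivWithin_mul_genW_wIdx, Finset.sum_div]
  refine Finset.sum_congr rfl fun i _ => ?_
  rw [Phi, show n - (n - 1 - i) - 1 = i by omega]
  ring

theorem solvesDE_Phi {n : ℕ} {I : Set ℝ} (hI : UniqueDiffOn ℝ I) {f : ℝ → Fin n → ℝ} {p : Fin n}
    (hf : ContDiffOn ℝ n (fun t => f t p) I) (hW : ∀ x ∈ I, genW I f (wIdx n) x ≠ 0) :
    SolvesDE I (fun x (i : Fin n) => Phi I f (n - 1 - i) x) (fun t => f t p) :=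
  ⟨fun _ hk => hf.differentiableOn_iteratedDerivWithin (mod_cast hk) hI,
    fun x hx => iteratedDerivWithin_eq_sum_Phi_mul (hW x hx) p⟩

theorem linearIndependent_domRestrict_of_genW_ne_zero {n : ℕ} {I : Set ℝ} (hI : UniqueDiffOn ℝ I)
    {f : ℝ → Fin n → ℝ} {k : Fin n → ℕ} (hf : ∀ p q, ContDiffOn ℝ (k q) (fun t => f t p) I)
    {x : ℝ} (hx : x ∈ I) (hW : genW I f k x ≠ 0) :
    LinearIndependent ℝ fun p : Fin n => I.domRestrict fun t => f t p := by
  rw [Fintype.linearIndependent_iff]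
  intro c hc
  have hcomb : Set.EqOn (∑ p, fun t => c p * f t p) 0 I := fun t ht => by
    simpa [Set.domRestrict_apply] using congrFun hc ⟨t, ht⟩
  have hjet : c ᵥ* of (fun p q => iteratedDerivWithin (k q) (fun t => f t p) I x) = 0 := by
    ext q
    have hq := iteratedDerivWithin_congr (n := k q) hcomb hx
    rw [iteratedDerivWithin_sum hx hI fun p _ => contDiffOn_const.mul (hf p q) x hx] at hq
    simpa [vecMul, dotProduct] using hq
  exact congrFun (eq_zero_of_vecMul_eq_zero hW hjet)

theorem stmt_11_general (n : ℕ) (I : Set ℝ) (hIo : IsOpen I) (hIne : I.Nonempty)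
    (f : ℝ → Fin n → ℝ)
    (hf : ∀ p : Fin n, ContDiffOn ℝ ((n : ℕ) : ℕ∞) (fun t => f t p) I)
    (hW : ∀ x ∈ I, genW I f (wIdx n) x ≠ 0) :
    FundSystem I (fun x i => Phi I f (n - 1 - (i : ℕ)) x) f := by
  obtain ⟨x, hx⟩ := hIne
  have hwIdx : ∀ q, wIdx n q ≤ n := fun q => (Nat.sub_le _ _).trans (Nat.sub_le _ _)
  exact ⟨fun p => solvesDE_Phi hIo.uniqueDiffOn (hf p) hW,
    linearIndependent_domRestrict_of_genW_ne_zero hIo.uniqueDiffOn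
      (fun p q => (hf p).of_le (mod_cast hwIdx q)) hx (hW x hx)⟩

/-- if `f : I → ℝ^n` is `n`-times continuously differentiable with
nonvanishing Wronskian, then its components form a fundamental system of solutions of
`y^{(n)} = ∑_{j=0}^{n-1} Φ_f^{[j]} y^{(j)}` on `I` (coefficient of `y^{(n-1-i)}` is
`Φ_f^{[n-1-i]}`). -/
theorem stmt_11 (n : ℕ) (hn : 0 < n) (I : Set ℝ) (hIo : IsOpen I) (hIne : I.Nonempty)
    (hIc : I.OrdConnected) (f : ℝ → Fin n → ℝ)
    (hf : ∀ p : Fin n, ContDiffOn ℝ ((n : ℕ) : ℕ∞) (fun t => f t p) I)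
    (hW : ∀ x ∈ I, genW I f (wIdx n) x ≠ 0) :
    FundSystem I (fun x i => Phi I f (n - 1 - (i : ℕ)) x) f :=
  stmt_11_general n I hIo hIne f hf hW
end
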